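/- Define graphs R_i recursively: R_0 is the empty graph, and R_i consists of a clique on vertices v_1,...,v_i together with i disjoint copies H_1,...,H_i of R_{floor((i-1)/2)}, with v_j adjacent to all vertices of H_j. Then the centered coloring number satisfies chi_cen(R_i) = i + chi_cen(R_{floor((i-1)/2)}). -/

import Mathlib

/-- A linear coloring: every path in `G` contains a vertex whose color appears
exactly once on the path. -/
def IsLinearColoring {V C : Type*} [DecidableEq C] (G : SimpleGraph V) (ψ : V → C) : Prop :=
  ∀ ⦃u v : V⦄ (p : G.Walk u v), p.IsPath →
    ∃ w ∈ p.support, (p.support.map ψ).count (ψ w) = 1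

/-- A centered coloring: every nonempty vertex set inducing a connected subgraph
contains a vertex whose color appears exactly once in the set. -/
def IsCenteredColoring {V C : Type*} [DecidableEq C] (G : SimpleGraph V) (φ : V → C) : Prop :=
  ∀ S : Finset V, S.Nonempty → (G.induce (S : Set V)).Connected →
    ∃ w ∈ S, (S.filter (fun x => φ x = φ w)).card = 1

/-- The linear coloring number: minimum number of colors of a linear coloring. -/
noncomputable def chiLin {V : Type*} (G : SimpleGraph V) : ℕ :=
  sInf {k | ∃ ψ : V → Fin k, IsLinearColoring G ψ}

/-- The centered coloring number: minimum number of colors of a centered coloring. -/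
noncomputable def chiCen {V : Type*} (G : SimpleGraph V) : ℕ :=
  sInf {k | ∃ φ : V → Fin k, IsCenteredColoring G φ}

/-- A treedepth decomposition of `G`: a rooted forest on the vertices of `G`,
given by its ancestor relation `anc` (a partial order whose down-sets are chains),
such that every edge of `G` joins an ancestor-descendant pair. -/
structure TreedepthDecomp {V : Type*} (G : SimpleGraph V) where
  anc : V → V → Prop
  refl : ∀ v, anc v v
  antisymm : ∀ u v, anc u v → anc v u → u = v
  trans : ∀ u v w, anc u v → anc v w → anc u w
  chain : ∀ u v w, anc u w → anc v w → anc u v ∨ anc v u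
  edge : ∀ u v, G.Adj u v → anc u v ∨ anc v u

/-- The decomposition has depth at most `k`: every ancestor-descendant chain has
at most `k` vertices. -/
def TreedepthDecomp.depthLE {V : Type*} {G : SimpleGraph V} (d : TreedepthDecomp G)
    (k : ℕ) : Prop :=
  ∀ s : Finset V, (∀ a ∈ s, ∀ b ∈ s, d.anc a b ∨ d.anc b a) → s.card ≤ k

/-- The treedepth of `G`: minimum depth of a treedepth decomposition. -/
noncomputable def treedepth {V : Type*} (G : SimpleGraph V) : ℕ :=
  sInf {k | ∃ d : TreedepthDecomp G, d.depthLE k}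

/-- The (asymmetric) edge relation of the recursive graph family `R_i`,
on vertices encoded as lists: the clique vertex `v_j` is `[j]`, and a vertex `w`
of the `j`-th copy `H_j` of `R_{⌊(i-1)/2⌋}` is encoded as `j :: w`. -/
def RRel : ℕ → List ℕ → List ℕ → Prop
  | 0 => fun _ _ => False
  | (i + 1) => fun x y =>
      (∃ a b, x = [a] ∧ y = [b] ∧ a ≠ b)
      ∨ (∃ j w, w ≠ [] ∧ x = [j] ∧ y = j :: w)
      ∨ (∃ j w w', RRel (i / 2) w w' ∧ x = j :: w ∧ y = j :: w')
termination_by i => i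
decreasing_by exact Nat.lt_succ_of_le (Nat.div_le_self i 2)

/-- The vertex set of `R_i` (as lists): `R_0` is empty, and `R_{i}` consists of
clique vertices `v_1, …, v_i` (encoded `[j]`, `j < i`) together with `i`
disjoint copies `H_1, …, H_i` of `R_{⌊(i-1)/2⌋}` (the `j`-th copy prefixed by `j`). -/
def RVset : ℕ → Set (List ℕ)
  | 0 => ∅
  | (i + 1) => {x | (∃ j, j < i + 1 ∧ x = [j]) ∨
      ∃ j w, j < i + 1 ∧ w ∈ RVset (i / 2) ∧ x = j :: w}
termination_by i => i
decreasing_by exact Nat.lt_succ_of_le (Nat.div_le_self i 2)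

/-- The recursive graph `R_i`: a clique on `v_1, …, v_i`, with `v_j` additionally
adjacent to every vertex of the `j`-th copy of `R_{⌊(i-1)/2⌋}`. -/
def RGraph (i : ℕ) : SimpleGraph (RVset i) :=
  (SimpleGraph.fromRel (RRel i)).induce (RVset i)

/-!
`R_{n+1}` is a clique `v_0, …, v_n` in which `v_j` is joined to every vertex of a private copy
`H_j` of `H = R_{⌊n/2⌋}`. Giving the clique `n + 1` fresh colors on top of an optimal centered
coloring of each copy gives a centered coloring: a connected set meeting the clique has a clique
vertex as its centre, and one avoiding the clique lies inside a single copy.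

Conversely, in a centered coloring the clique uses `n + 1` distinct colors, and some copy avoids
all of them. Otherwise pick in each `H_j` a vertex `u_j` colored like some `v_{σ j}`; on the set
`P` of periodic points of `σ`, which `σ` maps bijectively onto itself, the connected set
`{v_j, u_j | j ∈ P}` has every color at least twice. That copy then needs `χ_cen(H)` further
colors.
-/

open Finset Function

section CenteredColoring

variable {V W C C' : Type*} [DecidableEq C] [DecidableEq C'] {G : SimpleGraph V}
  {H : SimpleGraph W}

theorem isCenteredColoring_congr {φ : V → C} {ψ : V → C'} (h : ∀ x y, φ x = φ y ↔ ψ x = ψ y) :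
    IsCenteredColoring G φ ↔ IsCenteredColoring G ψ := by
  have hfilter (S : Finset V) (w : V) :
      S.filter (fun x => φ x = φ w) = S.filter (fun x => ψ x = ψ w) :=
    filter_congr fun x _ => h x w
  simp only [IsCenteredColoring, hfilter]

theorem isCenteredColoring_of_injective {φ : V → C} (hφ : Injective φ) :
    IsCenteredColoring G φ := by
  rintro S ⟨w, hw⟩ -
  refine ⟨w, hw, card_eq_one.2 ⟨w, ?_⟩⟩
  ext x
  simp only [mem_filter, mem_singleton, hφ.eq_iff]
  constructor
  · exact fun h => h.2
  · rintro rfl; exact ⟨hw, rfl⟩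

theorem IsCenteredColoring.ne_of_adj {φ : V → C} (hφ : IsCenteredColoring G φ) {u v : V}
    (huv : G.Adj u v) : φ u ≠ φ v := by
  classical
  intro heq
  have hconn : (G.induce (({u, v} : Finset V) : Set V)).Connected := by
    rw [coe_pair]; exact SimpleGraph.induce_pair_connected_of_adj huv
  obtain ⟨w, hw, hcard⟩ := hφ {u, v} (insert_nonempty u {v}) hconn
  have hall : ({u, v} : Finset V).filter (fun x => φ x = φ w) = {u, v} := by
    refine filter_true_of_mem fun x hx => ?_
    simp only [mem_insert, mem_singleton] at hx hw
    rcases hx with rfl | rfl <;> rcases hw with rfl | rfl <;> simp [heq]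
  rw [hall, card_pair huv.ne] at hcard
  exact absurd hcard (by norm_num)

noncomputable def SimpleGraph.Embedding.induceImage (e : H ↪g G) (s : Set W) :
    H.induce s ≃g G.induce (e '' s) where
  toEquiv := Equiv.Set.image e s e.injective
  map_rel_iff' := by simp

theorem IsCenteredColoring.exists_of_subset_range {φ : V → C} (e : H ↪g G)
    (hφ : IsCenteredColoring H (φ ∘ e)) {S : Finset V} (hS : S.Nonempty)
    (hconn : (G.induce (S : Set V)).Connected) (hsub : (S : Set V) ⊆ Set.range e) :
    ∃ w ∈ S, (S.filter (fun x => φ x = φ w)).card = 1 := by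
  classical
  obtain ⟨S', -, rfl⟩ := subset_set_image_iff.1 (Set.image_univ ▸ hsub)
  rw [coe_image, ← (e.induceImage _).connected_iff] at hconn
  obtain ⟨w, hw, hcard⟩ := hφ S' (image_nonempty.1 hS) hconn
  refine ⟨e w, mem_image_of_mem e hw, ?_⟩
  rwa [filter_image, card_image_of_injective _ e.injective]

theorem IsCenteredColoring.comp_embedding {φ : V → C} (hφ : IsCenteredColoring G φ)
    (e : H ↪g G) : IsCenteredColoring H (φ ∘ e) := by
  classical
  intro S hS hconn
  rw [(e.induceImage _).connected_iff, ← coe_image] at hconn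
  obtain ⟨w, hw, hcard⟩ := hφ (S.image e) (hS.image e) hconn
  obtain ⟨w, hw', rfl⟩ := mem_image.1 hw
  refine ⟨w, hw', ?_⟩
  rwa [filter_image, card_image_of_injective _ e.injective] at hcard

end CenteredColoring

section ChiCen

variable {V W C : Type*} {G : SimpleGraph V} {H : SimpleGraph W}

theorem chiCen_le_card_of_forall_mem [DecidableEq C] {φ : V → C}
    (hφ : IsCenteredColoring G φ) (T : Finset C) (hT : ∀ v, φ v ∈ T) : chiCen G ≤ T.card := by
  refine Nat.sInf_le ⟨fun v => T.equivFin ⟨φ v, hT v⟩, ?_⟩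
  refine (isCenteredColoring_congr fun x y => ?_).1 hφ
  rw [T.equivFin.apply_eq_iff_eq, Subtype.mk.injEq]

theorem chiCen_le_card [Fintype C] [DecidableEq C] {φ : V → C} (hφ : IsCenteredColoring G φ) :
    chiCen G ≤ Fintype.card C :=
  chiCen_le_card_of_forall_mem hφ univ fun v => mem_univ (φ v)

theorem exists_isCenteredColoring_chiCen [Finite V] (G : SimpleGraph V) :
    ∃ φ : V → Fin (chiCen G), IsCenteredColoring G φ :=
  Nat.sInf_mem (s := {k | ∃ φ : V → Fin k, IsCenteredColoring G φ})
    ⟨Nat.card V, Finite.equivFin V, isCenteredColoring_of_injective (Finite.equivFin V).injective⟩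

theorem SimpleGraph.Iso.chiCen_eq (e : G ≃g H) : chiCen G = chiCen H := by
  classical
  refine congrArg sInf (Set.ext fun k =>
    ⟨fun ⟨φ, hφ⟩ => ⟨φ ∘ e.symm, ?_⟩, fun ⟨φ, hφ⟩ => ⟨φ ∘ e, ?_⟩⟩)
  · exact hφ.comp_embedding e.symm.toEmbedding
  · exact hφ.comp_embedding e.toEmbedding

end ChiCen

theorem SimpleGraph.Connected.induce_apply_eq {V α : Type*} {G : SimpleGraph V} {s : Set V}
    (hs : (G.induce s).Connected) {f : V → α} (hf : ∀ u ∈ s, ∀ v ∈ s, G.Adj u v → f u = f v)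
    {u v : V} (hu : u ∈ s) (hv : v ∈ s) : f u = f v := by
  suffices h : ∀ {a b : s}, (G.induce s).Walk a b → f a = f b from
    h (hs.preconnected ⟨u, hu⟩ ⟨v, hv⟩).some
  intro a b p
  induction p with
  | nil => rfl
  | cons h _ ih => exact (hf _ (Subtype.prop _) _ (Subtype.prop _) h).trans ih

theorem Function.periodicPts_nonempty {α : Type*} [Finite α] [Nonempty α] (f : α → α) :
    (periodicPts f).Nonempty := by
  obtain ⟨x⟩ := ‹Nonempty α›
  obtain ⟨m, n, heq, hne⟩ : ∃ m n, f^[m] x = f^[n] x ∧ m ≠ n := by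
    simpa [Injective] using not_injective_infinite_finite (f^[·] x)
  wlog hmn : m < n generalizing m n
  · exact this n m heq.symm hne.symm (by omega)
  refine ⟨f^[m] x, mk_mem_periodicPts (n := n - m) (by omega) ?_⟩
  rw [IsPeriodicPt, IsFixedPt, ← iterate_add_apply, Nat.sub_add_cancel hmn.le, heq]

def apexCliqueGraph (ι : Type*) {W : Type*} (H : SimpleGraph W) : SimpleGraph (ι ⊕ ι × W) where
  Adj
    | .inl i, .inl j => i ≠ j
    | .inl i, .inr (j, _) => i = j
    | .inr (i, _), .inl j => i = j
    | .inr (i, w), .inr (j, w') => i = j ∧ H.Adj w w'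
  symm := ⟨by rintro (_ | ⟨_, _⟩) (_ | ⟨_, _⟩) h <;> simp_all [eq_comm, H.adj_comm]⟩
  loopless := ⟨by rintro (_ | ⟨_, _⟩) h <;> simp_all⟩

namespace apexCliqueGraph

variable {ι W C : Type*} {H : SimpleGraph W}

@[simp] theorem adj_inl_inl {i j : ι} : (apexCliqueGraph ι H).Adj (.inl i) (.inl j) ↔ i ≠ j :=
  Iff.rfl

@[simp] theorem adj_inl_inr {i j : ι} {w : W} :
    (apexCliqueGraph ι H).Adj (.inl i) (.inr (j, w)) ↔ i = j :=
  Iff.rfl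

@[simp] theorem adj_inr_inl {i j : ι} {w : W} :
    (apexCliqueGraph ι H).Adj (.inr (i, w)) (.inl j) ↔ i = j :=
  Iff.rfl

@[simp] theorem adj_inr_inr {i j : ι} {w w' : W} :
    (apexCliqueGraph ι H).Adj (.inr (i, w)) (.inr (j, w')) ↔ i = j ∧ H.Adj w w' :=
  Iff.rfl

def copy (i : ι) : H ↪g apexCliqueGraph ι H where
  toFun w := .inr (i, w)
  inj' := Sum.inr_injective.comp (Prod.mk_right_injective i)
  map_rel_iff' := by simp

@[simp] theorem copy_apply (i : ι) (w : W) : copy (H := H) i w = .inr (i, w) := rfl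

theorem isCenteredColoring_sumMap [DecidableEq ι] [DecidableEq C] {ψ : W → C}
    (hψ : IsCenteredColoring H ψ) :
    IsCenteredColoring (apexCliqueGraph ι H) (Sum.map id (ψ ∘ Prod.snd)) := by
  intro S hS hconn
  by_cases hclique : ∃ i, .inl i ∈ S
  · obtain ⟨i, hi⟩ := hclique
    refine ⟨.inl i, hi, card_eq_one.2 ⟨.inl i, ?_⟩⟩
    ext (j | ⟨j, w⟩) <;> rw [mem_filter]
    · simpa using fun h : j = i => h ▸ hi
    · simp
  push Not at hclique
  obtain ⟨(i | ⟨i, w₀⟩), hx₀⟩ := id hS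
  · exact absurd hx₀ (hclique i)
  have hblock : ∀ x ∈ S, Sum.elim id Prod.fst x = i := by
    refine fun x hx => hconn.induce_apply_eq ?_ hx hx₀
    rintro (j | ⟨j, w⟩) hj (k | ⟨k, w'⟩) hk hjk
    all_goals first | exact absurd ‹_› (hclique _) | exact (adj_inr_inr.1 hjk).1
  refine (isCenteredColoring_congr fun w w' => ?_).1 hψ |>.exists_of_subset_range (copy i) hS
    hconn ?_
  · simp
  · rintro (j | ⟨j, w⟩) hx
    · exact absurd hx (hclique j)
    · exact ⟨w, by simpa using (hblock _ hx).symm⟩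

theorem chiCen_le_card_add [Fintype ι] [Finite W] :
    chiCen (apexCliqueGraph ι H) ≤ Fintype.card ι + chiCen H := by
  classical
  obtain ⟨ψ, hψ⟩ := exists_isCenteredColoring_chiCen H
  simpa using chiCen_le_card (isCenteredColoring_sumMap (ι := ι) hψ)

theorem connected_induce_disjSum [DecidableEq ι] [DecidableEq W] {K : Finset ι}
    (hK : K.Nonempty) (u : ι → W) :
    ((apexCliqueGraph ι H).induce (K.disjSum (K.image fun i => (i, u i)) : Set _)).Connected := by
  obtain ⟨a, ha⟩ := hK
  set S := K.disjSum (K.image fun i => (i, u i))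
  have hreach {x y} (hx : x ∈ S) (hy : y ∈ S) (hxy : x = y ∨ (apexCliqueGraph ι H).Adj x y) :
      ((apexCliqueGraph ι H).induce (S : Set _)).Reachable ⟨x, hx⟩ ⟨y, hy⟩ := by
    rcases hxy with rfl | hxy
    · rfl
    · exact SimpleGraph.Adj.reachable (by simpa using hxy)
  have haS : Sum.inl a ∈ S := inl_mem_disjSum.2 ha
  rw [SimpleGraph.connected_iff_exists_forall_reachable]
  refine ⟨⟨.inl a, haS⟩, ?_⟩
  rintro ⟨(l | ⟨l, w⟩), hx⟩
  · exact hreach haS hx (by simpa using eq_or_ne a l)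
  · obtain ⟨l, hl, hlw⟩ := mem_image.1 (inr_mem_disjSum.1 hx)
    cases hlw
    have hlS : Sum.inl l ∈ S := inl_mem_disjSum.2 hl
    exact (hreach haS hlS (by simpa using eq_or_ne a l)).trans (hreach hlS hx (by simp))

theorem _root_.IsCenteredColoring.exists_copy_avoiding_clique [DecidableEq C] [Finite ι]
    [Nonempty ι] {φ : ι ⊕ ι × W → C} (hφ : IsCenteredColoring (apexCliqueGraph ι H) φ) :
    ∃ i, ∀ w j, φ (.inr (i, w)) ≠ φ (.inl j) := by
  classical
  by_contra! h
  choose u σ hσ using h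
  have hK := (Set.toFinite (periodicPts σ)).coe_toFinset ▸ bijOn_periodicPts σ
  set K := (Set.toFinite (periodicPts σ)).toFinset
  have hKne : K.Nonempty := by simpa [K] using periodicPts_nonempty σ
  set S := K.disjSum (K.image fun i => (i, u i))
  have hpartner : ∀ x ∈ S, ∃ y ∈ S, y ≠ x ∧ φ y = φ x := by
    rintro (l | ⟨l, w⟩) hx
    · obtain ⟨l', hl', rfl⟩ := hK.surjOn (inl_mem_disjSum.1 hx)
      exact ⟨.inr (l', u l'), inr_mem_disjSum.2 (mem_image_of_mem _ hl'), by simp, hσ l'⟩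
    · obtain ⟨l, hl, hlw⟩ := mem_image.1 (inr_mem_disjSum.1 hx)
      cases hlw
      exact ⟨.inl (σ l), inl_mem_disjSum.2 (hK.mapsTo hl), by simp, (hσ l).symm⟩
  have hSne : S.Nonempty := let ⟨a, ha⟩ := hKne; ⟨.inl a, inl_mem_disjSum.2 ha⟩
  obtain ⟨w, hw, hcard⟩ := hφ S hSne (connected_induce_disjSum hKne u)
  obtain ⟨y, hy, hyw, hyc⟩ := hpartner w hw
  have : 1 < (S.filter fun x => φ x = φ w).card :=
    one_lt_card.2 ⟨y, mem_filter.2 ⟨hy, hyc⟩, w, mem_filter.2 ⟨hw, rfl⟩, hyw⟩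
  omega

theorem card_add_chiCen_le [Fintype ι] [Nonempty ι] [Finite W] :
    Fintype.card ι + chiCen H ≤ chiCen (apexCliqueGraph ι H) := by
  classical
  obtain ⟨φ, hφ⟩ := exists_isCenteredColoring_chiCen (apexCliqueGraph ι H)
  set K := univ.image (φ ∘ Sum.inl)
  have hK : K.card = Fintype.card ι := card_image_of_injective _ fun i j hij => by
    by_contra hne
    exact hφ.ne_of_adj (adj_inl_inl.2 hne) hij
  obtain ⟨i, hi⟩ := hφ.exists_copy_avoiding_clique
  have hcopy : chiCen H ≤ Kᶜ.card :=
    chiCen_le_card_of_forall_mem (hφ.comp_embedding (copy i)) Kᶜ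
      fun w => by simpa [K, eq_comm] using hi w
  have hKle := card_le_univ K
  rw [card_compl, hK, Fintype.card_fin] at hcopy
  rw [hK, Fintype.card_fin] at hKle
  omega

theorem chiCen_eq [Fintype ι] [Nonempty ι] [Finite W] (H : SimpleGraph W) :
    chiCen (apexCliqueGraph ι H) = Fintype.card ι + chiCen H :=
  le_antisymm chiCen_le_card_add card_add_chiCen_le

end apexCliqueGraph

theorem mem_rVset_succ {n : ℕ} {x : List ℕ} : x ∈ RVset (n + 1) ↔
    (∃ j, j < n + 1 ∧ x = [j]) ∨
      ∃ j w, j < n + 1 ∧ w ∈ RVset (n / 2) ∧ x = j :: w := by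
  rw [RVset]; rfl

theorem rRel_succ_iff {n : ℕ} {x y : List ℕ} : RRel (n + 1) x y ↔
    (∃ a b, x = [a] ∧ y = [b] ∧ a ≠ b)
      ∨ (∃ j w, w ≠ [] ∧ x = [j] ∧ y = j :: w)
      ∨ (∃ j w w', RRel (n / 2) w w' ∧ x = j :: w ∧ y = j :: w') := by
  rw [RRel]

@[simp] theorem rVset_val_ne_nil {i : ℕ} (x : RVset i) : (x : List ℕ) ≠ [] := by
  obtain ⟨x, hx⟩ := x
  cases i with
  | zero => simp [RVset] at hx
  | succ n => rcases mem_rVset_succ.1 hx with ⟨j, -, rfl⟩ | ⟨j, w, -, -, rfl⟩ <;> simp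

@[simp] theorem not_rRel_nil_left {i : ℕ} {y : List ℕ} : ¬RRel i [] y := by
  cases i with
  | zero => simp [RRel]
  | succ n => simp [rRel_succ_iff]

@[simp] theorem not_rRel_nil_right {i : ℕ} {x : List ℕ} : ¬RRel i x [] := by
  cases i with
  | zero => simp [RRel]
  | succ n => simp [rRel_succ_iff]

theorem rVset_finite (i : ℕ) : (RVset i).Finite := by
  induction i using Nat.strong_induction_on with
  | _ i ih =>
    cases i with
    | zero => simp [RVset]
    | succ n =>
      refine (((Set.finite_Iio (n + 1)).image fun j => [j]).union
        ((Set.finite_Iio (n + 1)).image2 List.cons (ih (n / 2) (by omega)))).subset ?_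
      rintro x hx
      rcases mem_rVset_succ.1 hx with ⟨j, hj, rfl⟩ | ⟨j, w, hj, hw, rfl⟩
      · exact .inl ⟨j, hj, rfl⟩
      · exact .inr ⟨j, hj, w, hw, rfl⟩

instance (i : ℕ) : Finite (RVset i) := (rVset_finite i).to_subtype

def rGraphSuccEncode (n : ℕ) : Fin (n + 1) ⊕ Fin (n + 1) × RVset (n / 2) → RVset (n + 1)
  | .inl j => ⟨[j], mem_rVset_succ.2 (.inl ⟨j, j.2, rfl⟩)⟩
  | .inr (j, w) => ⟨j :: w, mem_rVset_succ.2 (.inr ⟨j, w, j.2, w.2, rfl⟩)⟩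

theorem rGraphSuccEncode_bijective (n : ℕ) : Bijective (rGraphSuccEncode n) := by
  refine ⟨?_, ?_⟩
  · rintro (a | ⟨a, w⟩) (b | ⟨b, w'⟩) h <;>
      simp_all [rGraphSuccEncode, Fin.val_inj, Subtype.ext_iff, eq_comm]
  · rintro ⟨x, hx⟩
    rcases mem_rVset_succ.1 hx with ⟨j, hj, rfl⟩ | ⟨j, w, hj, hw, rfl⟩
    exacts [⟨.inl ⟨j, hj⟩, rfl⟩, ⟨.inr (⟨j, hj⟩, ⟨w, hw⟩), rfl⟩]

theorem rGraph_succ_adj_encode (n : ℕ) (x y : Fin (n + 1) ⊕ Fin (n + 1) × RVset (n / 2)) :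
    (RGraph (n + 1)).Adj (rGraphSuccEncode n x) (rGraphSuccEncode n y) ↔
      (apexCliqueGraph (Fin (n + 1)) (RGraph (n / 2))).Adj x y := by
  rcases x with a | ⟨a, w⟩ <;> rcases y with b | ⟨b, w'⟩ <;>
    simp [RGraph, rGraphSuccEncode, rRel_succ_iff, Fin.val_inj] <;> grind

noncomputable def rGraphSuccIso (n : ℕ) :
    apexCliqueGraph (Fin (n + 1)) (RGraph (n / 2)) ≃g RGraph (n + 1) where
  toEquiv := .ofBijective _ (rGraphSuccEncode_bijective n)
  map_rel_iff' := rGraph_succ_adj_encode n _ _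

/-- the centered coloring number of `R_i` satisfies
`χ_cen(R_i) = i + χ_cen(R_{⌊(i-1)/2⌋})`. -/
theorem chiCen_rGraph (i : ℕ) :
    chiCen (RGraph i) = i + chiCen (RGraph ((i - 1) / 2)) := by
  cases i with
  | zero => simp
  | succ n =>
    rw [← (rGraphSuccIso n).chiCen_eq, apexCliqueGraph.chiCen_eq, Fintype.card_fin,
      Nat.add_sub_cancel]
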